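/- arXiv:2305.02272 — 9 statements merged into one kernel-verified Lean document; each statement's English description precedes it below -/
import Mathlib

section
/- Let v₁, v₂, v₃ be nonzero real numbers and V₁, V₂, V₃ real numbers satisfying v₁V₁ − v₂V₂ + v₃V₃ = 0 and V₁/v₁ + V₂/v₂ + V₃/v₃ = 0. Then for every choice of pairwise distinct indices i, j, k ∈ {1,2,3}: vᵢ(δⱼvⱼ² − δₖvₖ²)Vⱼ + vⱼ(δᵢvᵢ² − δₖvₖ²)Vᵢ = 0. -/
/-- δ₁ = 1, δ₂ = −1, δ₃ = 1 (indices 0,1,2 in `Fin 3`). -/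
noncomputable def delta : Fin 3 → ℝ := ![1, -1, 1]

/-! The signs δ play no role: for arbitrary weights δ, the left-hand side equals
`vᵢ vⱼ · (∑ δ v V) − δₖ vₖ · vᵢ vⱼ vₖ · (∑ V / v)`, and `{i, j, k}` exhausts `Fin 3`. -/

theorem Fin.sum_univ_three_of_ne {M : Type*} [AddCommMonoid M] (f : Fin 3 → M) {i j k : Fin 3}
    (hij : i ≠ j) (hjk : j ≠ k) (hik : i ≠ k) : ∑ x, f x = f i + f j + f k := by
  have huniv : ({i, j, k} : Finset (Fin 3)) = Finset.univ :=
    Finset.eq_univ_of_card _ (Finset.card_eq_three.mpr ⟨i, j, k, hij, hik, hjk, rfl⟩)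
  rw [← huniv, Finset.sum_insert (by simp [hij, hik]), Finset.sum_pair hjk, add_assoc]

theorem weighted_cross_relation {K : Type*} [Field K] {a b c A B C da db dc : K}
    (ha : a ≠ 0) (hb : b ≠ 0) (hc : c ≠ 0)
    (h1 : da * a * A + db * b * B + dc * c * C = 0) (h2 : A / a + B / b + C / c = 0) :
    a * (db * b ^ 2 - dc * c ^ 2) * B + b * (da * a ^ 2 - dc * c ^ 2) * A = 0 := by
  have h2' : A * b * c + B * a * c + C * a * b = 0 := by
    field_simp at h2
    linear_combination h2
  linear_combination a * b * h1 - dc * c * h2'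

/-- If v₁V₁ − v₂V₂ + v₃V₃ = 0 and V₁/v₁ + V₂/v₂ + V₃/v₃ = 0 with
vᵢ ≠ 0, then for all pairwise distinct i,j,k:
vᵢ(δⱼvⱼ² − δₖvₖ²)Vⱼ + vⱼ(δᵢvᵢ² − δₖvₖ²)Vᵢ = 0. -/
theorem stmt_1 (v V : Fin 3 → ℝ) (hv : ∀ i, v i ≠ 0)
    (h1 : v 0 * V 0 - v 1 * V 1 + v 2 * V 2 = 0)
    (h2 : V 0 / v 0 + V 1 / v 1 + V 2 / v 2 = 0) :
    ∀ i j k : Fin 3, i ≠ j → j ≠ k → i ≠ k →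
      v i * (delta j * (v j) ^ 2 - delta k * (v k) ^ 2) * V j
        + v j * (delta i * (v i) ^ 2 - delta k * (v k) ^ 2) * V i = 0 := by
  intro i j k hij hjk hik
  have hδ : ∑ x, delta x * v x * V x = 0 := by
    simp only [Fin.sum_univ_three, delta, Matrix.cons_val_zero, Matrix.cons_val_one,
      Matrix.cons_val]
    linear_combination h1
  have hdiv : ∑ x, V x / v x = 0 := by rwa [Fin.sum_univ_three]
  rw [Fin.sum_univ_three_of_ne _ hij hjk hik] at hδ hdiv
  exact weighted_cross_relation (hv i) (hv j) (hv k) hδ hdiv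
end

section
/- Let v₁, v₂, v₃ be nonzero real numbers and V₁, V₂, V₃ real numbers satisfying v₁² − v₂² + v₃² = 1, v₁V₁ − v₂V₂ + v₃V₃ = 0 and V₁/v₁ + V₂/v₂ + V₃/v₃ = 0. Then V₁² − V₂² + V₃² = −V₁² Θ / (v₁²(v₂² + v₃²)²), where Θ := −v₁² + v₁⁴ + v₂² − 10v₁²v₂² + 9v₁⁴v₂² + v₂⁴ − 9v₁²v₂⁴. -/
/-!
The two linear conditions on `V` (after clearing denominators in the second) determine `V₂` and
`V₃` as multiples of `V₁` by Cramer's rule, with common denominator `v₁ (v₂² + v₃²)`. Substituting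
into `V₁² − V₂² + V₃²` gives `V₁²` times a polynomial in `v`, which reduces to `−Θ` modulo the
quadric `v₁² − v₂² + v₃² = 1`.
-/

theorem mul_add_mul_add_mul_eq_zero_of_div_add_div_add_div_eq_zero {K : Type*} [Field K]
    {a b c x y z : K} (ha : a ≠ 0) (hb : b ≠ 0) (hc : c ≠ 0)
    (h : x / a + y / b + z / c = 0) : b * c * x + a * c * y + a * b * z = 0 := by
  field_simp at h
  linear_combination h

section CramerSolution

variable {R : Type*} [CommRing R] {v₁ v₂ v₃ V₁ V₂ V₃ : R}

def theta (v₁ v₂ : R) : R :=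
  -v₁ ^ 2 + v₁ ^ 4 + v₂ ^ 2 - 10 * v₁ ^ 2 * v₂ ^ 2 + 9 * v₁ ^ 4 * v₂ ^ 2 + v₂ ^ 4
    - 9 * v₁ ^ 2 * v₂ ^ 4

theorem cramer_V₂ (h1 : v₁ * V₁ - v₂ * V₂ + v₃ * V₃ = 0)
    (h2 : v₂ * v₃ * V₁ + v₁ * v₃ * V₂ + v₁ * v₂ * V₃ = 0) :
    v₁ * (v₂ ^ 2 + v₃ ^ 2) * V₂ = V₁ * v₂ * (v₁ ^ 2 - v₃ ^ 2) := by
  linear_combination v₃ * h2 - v₁ * v₂ * h1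

theorem cramer_V₃ (h1 : v₁ * V₁ - v₂ * V₂ + v₃ * V₃ = 0)
    (h2 : v₂ * v₃ * V₁ + v₁ * v₃ * V₂ + v₁ * v₂ * V₃ = 0) :
    v₁ * (v₂ ^ 2 + v₃ ^ 2) * V₃ = -(V₁ * v₃ * (v₁ ^ 2 + v₂ ^ 2)) := by
  linear_combination v₁ * v₃ * h1 + v₂ * h2

theorem sq_mul_quadForm_eq (h1 : v₁ * V₁ - v₂ * V₂ + v₃ * V₃ = 0)
    (h2 : v₂ * v₃ * V₁ + v₁ * v₃ * V₂ + v₁ * v₂ * V₃ = 0) :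
    (v₁ * (v₂ ^ 2 + v₃ ^ 2)) ^ 2 * (V₁ ^ 2 - V₂ ^ 2 + V₃ ^ 2) =
      V₁ ^ 2 * (v₁ ^ 2 * (v₂ ^ 2 + v₃ ^ 2) ^ 2 - v₂ ^ 2 * (v₁ ^ 2 - v₃ ^ 2) ^ 2
        + v₃ ^ 2 * (v₁ ^ 2 + v₂ ^ 2) ^ 2) := by
  have h₂ := cramer_V₂ h1 h2
  have h₃ := cramer_V₃ h1 h2
  linear_combination (-(v₁ * (v₂ ^ 2 + v₃ ^ 2) * V₂ + V₁ * v₂ * (v₁ ^ 2 - v₃ ^ 2))) * h₂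
    + (v₁ * (v₂ ^ 2 + v₃ ^ 2) * V₃ - V₁ * v₃ * (v₁ ^ 2 + v₂ ^ 2)) * h₃

theorem coeff_eq_neg_theta (h0 : v₁ ^ 2 - v₂ ^ 2 + v₃ ^ 2 = 1) :
    v₁ ^ 2 * (v₂ ^ 2 + v₃ ^ 2) ^ 2 - v₂ ^ 2 * (v₁ ^ 2 - v₃ ^ 2) ^ 2
      + v₃ ^ 2 * (v₁ ^ 2 + v₂ ^ 2) ^ 2 = -theta v₁ v₂ := by
  unfold theta
  linear_combination ((v₁ ^ 2 - v₂ ^ 2) * v₃ ^ 2 + 8 * v₁ ^ 2 * v₂ ^ 2 + v₁ ^ 2 - v₂ ^ 2) * h0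

end CramerSolution

/-- V₁² − V₂² + V₃² = −V₁² Θ / (v₁²(v₂² + v₃²)²), where
Θ = −v₁² + v₁⁴ + v₂² − 10v₁²v₂² + 9v₁⁴v₂² + v₂⁴ − 9v₁²v₂⁴. -/
theorem stmt_4 (v₁ v₂ v₃ V₁ V₂ V₃ : ℝ)
    (hv₁ : v₁ ≠ 0) (hv₂ : v₂ ≠ 0) (hv₃ : v₃ ≠ 0)
    (h0 : v₁ ^ 2 - v₂ ^ 2 + v₃ ^ 2 = 1)
    (h1 : v₁ * V₁ - v₂ * V₂ + v₃ * V₃ = 0)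
    (h2 : V₁ / v₁ + V₂ / v₂ + V₃ / v₃ = 0) :
    V₁ ^ 2 - V₂ ^ 2 + V₃ ^ 2 =
      -(V₁ ^ 2 * (-v₁ ^ 2 + v₁ ^ 4 + v₂ ^ 2 - 10 * v₁ ^ 2 * v₂ ^ 2
        + 9 * v₁ ^ 4 * v₂ ^ 2 + v₂ ^ 4 - 9 * v₁ ^ 2 * v₂ ^ 4))
        / (v₁ ^ 2 * (v₂ ^ 2 + v₃ ^ 2) ^ 2) := by
  have h2' := mul_add_mul_add_mul_eq_zero_of_div_add_div_add_div_eq_zero hv₁ hv₂ hv₃ h2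
  have key := sq_mul_quadForm_eq h1 h2'
  rw [coeff_eq_neg_theta h0, theta] at key
  rw [eq_div_iff (by positivity)]
  linear_combination key
end

section
/- Let v₁, v₂, v₃ be positive real numbers, V₁, V₂, V₃ real numbers and c, c̃ real constants satisfying the system (⋆). If c − c̃ < 0, then v₁ ≠ v₂, v₃ ≠ v₂, v₁² ≠ 1, v₃² ≠ 1, 3v₁² ≠ 1 and 3v₃² ≠ 1 (i.e. vᵢ² − δᵢ ≠ 0 and 3vᵢ² − δᵢ ≠ 0 for i = 1,2,3). -/
/-!
By the second and fourth equations (the latter multiplied by `v₁ v₂ v₃`), `V = (V₁, V₂, V₃)` is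
orthogonal to `a = (v₁, -v₂, v₃)` and to `b = (v₂ v₃, v₁ v₃, v₁ v₂)`, hence parallel to `a × b`.
So for the Lorentz form `Q = x₁² - x₂² + x₃²`, `Q(V) = c - c̃ < 0` forces `Q(a × b) < 0`.
Each of the excluded equalities (together with the first equation) turns `Q(a × b)` into a
sum of squares.
-/

open Matrix

lemma smul_eq_smul_of_cross_eq_zero {R : Type*} [CommRing R] {x w : Fin 3 → R}
    (h : x ⨯₃ w = 0) : w 0 • x = x 0 • w := by
  have h1 := congrFun h 1
  have h2 := congrFun h 2
  simp only [cross_apply, Fin.isValue, cons_val, Pi.zero_apply] at h1 h2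
  ext i
  fin_cases i
  · exact mul_comm _ _
  · show w 0 * x 1 = x 0 * w 1
    linear_combination -h2
  · show w 0 * x 2 = x 0 * w 2
    linear_combination h1

lemma QuadraticMap.mul_self_smul_eq_of_cross_eq_zero {R M : Type*} [CommRing R]
    [AddCommGroup M] [Module R M] (Q : QuadraticMap R (Fin 3 → R) M) {x w : Fin 3 → R}
    (h : x ⨯₃ w = 0) : (w 0 * w 0) • Q x = (x 0 * x 0) • Q w := by
  rw [← Q.map_smul, ← Q.map_smul, smul_eq_smul_of_cross_eq_zero h]

/-- `Q(a × b)` with `a`, `b`, `Q` as in the header, written in `p = v₁²`, `q = v₂²`, `r = v₃²`. -/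
def crossForm (p q r : ℝ) : ℝ := p * (q + r) ^ 2 - q * (r - p) ^ 2 + r * (p + q) ^ 2

lemma crossForm_comm (p q r : ℝ) : crossForm p q r = crossForm r q p := by
  unfold crossForm; ring

lemma crossForm_neg_of_system {v₁ v₂ v₃ V₁ V₂ V₃ : ℝ} (hv₁ : v₁ ≠ 0) (hv₂ : v₂ ≠ 0)
    (hv₃ : v₃ ≠ 0) (h1 : v₁ * V₁ - v₂ * V₂ + v₃ * V₃ = 0)
    (hneg : V₁ ^ 2 - V₂ ^ 2 + V₃ ^ 2 < 0) (h3 : V₁ / v₁ + V₂ / v₂ + V₃ / v₃ = 0) :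
    crossForm (v₁ ^ 2) (v₂ ^ 2) (v₃ ^ 2) < 0 := by
  set x : Fin 3 → ℝ := ![V₁, V₂, V₃]
  set a : Fin 3 → ℝ := ![v₁, -v₂, v₃]
  set b : Fin 3 → ℝ := ![v₂ * v₃, v₁ * v₃, v₁ * v₂]
  have hax : a ⬝ᵥ x = 0 := by
    simp only [a, x, vec3_dotProduct, Fin.isValue, cons_val_zero, cons_val_one, cons_val]
    linear_combination h1
  have hxb : x ⬝ᵥ b = 0 := by
    simp only [x, b, vec3_dotProduct, Fin.isValue, cons_val_zero, cons_val_one, cons_val]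
    field_simp at h3
    linear_combination h3
  have hpar : x ⨯₃ (a ⨯₃ b) = 0 := by
    rw [cross_cross_eq_smul_sub_smul', hax, hxb, zero_smul, zero_smul, sub_zero]
  have key := (QuadraticMap.weightedSumSquares ℝ ![(1 : ℝ), -1, 1]).mul_self_smul_eq_of_cross_eq_zero
    hpar
  simp only [Fin.isValue, cross_apply, cons_val_one, cons_val_zero, cons_val,
    QuadraticMap.weightedSumSquares_apply, smul_eq_mul, Fin.sum_univ_three, a, b, x] at key
  have hW : 0 < (v₁ * (v₂ ^ 2 + v₃ ^ 2)) ^ 2 := by positivity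
  have hprod : V₁ ^ 2 * crossForm (v₁ ^ 2) (v₂ ^ 2) (v₃ ^ 2) < 0 :=
    calc V₁ ^ 2 * crossForm (v₁ ^ 2) (v₂ ^ 2) (v₃ ^ 2)
        = (V₁ ^ 2 - V₂ ^ 2 + V₃ ^ 2) * (v₁ * (v₂ ^ 2 + v₃ ^ 2)) ^ 2 := by
          unfold crossForm; linear_combination -key
      _ < 0 := mul_neg_of_neg_of_pos hneg hW
  exact neg_of_mul_neg_right hprod (sq_nonneg V₁)

lemma crossForm_self_left_nonneg {p r : ℝ} (hr : 0 ≤ r) : 0 ≤ crossForm p p r := by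
  have : crossForm p p r = 8 * p ^ 2 * r := by unfold crossForm; ring
  rw [this]; positivity

lemma crossForm_self_right_nonneg {p r : ℝ} (hp : 0 ≤ p) : 0 ≤ crossForm p r r := by
  rw [crossForm_comm]; exact crossForm_self_left_nonneg hp

lemma crossForm_nonneg_of_three_mul_eq_one {p q r : ℝ} (hp : 3 * p = 1) (h : p - q + r = 1) :
    0 ≤ crossForm p q r := by
  obtain rfl : p = 1 / 3 := by linarith
  obtain rfl : q = r - 2 / 3 := by linarith
  have : crossForm (1 / 3) (r - 2 / 3) r = 2 * (r - 1 / 3) ^ 2 := by unfold crossForm; ring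
  rw [this]; positivity

/-- under the system (⋆) with c − c̃ < 0 and vᵢ > 0,
one has v₁ ≠ v₂, v₃ ≠ v₂, v₁² ≠ 1, v₃² ≠ 1, 3v₁² ≠ 1, 3v₃² ≠ 1. -/
theorem stmt_6 (v₁ v₂ v₃ V₁ V₂ V₃ c ct : ℝ)
    (hv₁ : 0 < v₁) (hv₂ : 0 < v₂) (hv₃ : 0 < v₃) (hc : c - ct < 0)
    (h0 : v₁ ^ 2 - v₂ ^ 2 + v₃ ^ 2 = 1)
    (h1 : v₁ * V₁ - v₂ * V₂ + v₃ * V₃ = 0)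
    (h2 : V₁ ^ 2 - V₂ ^ 2 + V₃ ^ 2 = c - ct)
    (h3 : V₁ / v₁ + V₂ / v₂ + V₃ / v₃ = 0) :
    v₁ ≠ v₂ ∧ v₃ ≠ v₂ ∧ v₁ ^ 2 ≠ 1 ∧ v₃ ^ 2 ≠ 1 ∧
      3 * v₁ ^ 2 ≠ 1 ∧ 3 * v₃ ^ 2 ≠ 1 := by
  have hF := crossForm_neg_of_system hv₁.ne' hv₂.ne' hv₃.ne' h1 (h2 ▸ hc) h3
  refine ⟨fun h ↦ ?_, fun h ↦ ?_, fun h ↦ ?_, fun h ↦ ?_, fun h ↦ ?_, fun h ↦ ?_⟩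
  · rw [h] at hF
    exact hF.not_ge (crossForm_self_left_nonneg (sq_nonneg v₃))
  · rw [h] at hF
    exact hF.not_ge (crossForm_self_right_nonneg (sq_nonneg v₁))
  · rw [show v₃ ^ 2 = v₂ ^ 2 by linarith] at hF
    exact hF.not_ge (crossForm_self_right_nonneg (sq_nonneg v₁))
  · rw [show v₁ ^ 2 = v₂ ^ 2 by linarith] at hF
    exact hF.not_ge (crossForm_self_left_nonneg (sq_nonneg v₃))
  · exact hF.not_ge (crossForm_nonneg_of_three_mul_eq_one h h0)
  · rw [crossForm_comm] at hF
    exact hF.not_ge (crossForm_nonneg_of_three_mul_eq_one h (by linarith))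
end

section
/- Let v₁, v₂, v₃ be positive real numbers, V₁, V₂, V₃ real numbers and c, c̃ real constants with c − c̃ > 0, satisfying the system (⋆), and assume the principal curvatures V₁/v₁, V₂/v₂, V₃/v₃ are pairwise distinct. Then 3v₁² ≠ 1 and 3v₃² ≠ 1 (i.e. 3vₖ² − δₖ ≠ 0 for k ∈ {1,3}). -/
/-!
Write `κᵢ = Vᵢ / vᵢ`, so that the second equation of (⋆) reads `κ₁v₁² − κ₂v₂² + κ₃v₃² = 0`.
Eliminating `κ₁` with `κ₁ + κ₂ + κ₃ = 0` and `v₃²` with the first equation gives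
`κ₃(1 − 2v₁²) − κ₂v₁² + (κ₃ − κ₂)v₂² = 0`, which for `3v₁² = 1` collapses to
`(v₁² + v₂²)(κ₃ − κ₂) = 0`, i.e. `κ₂ = κ₃`. The system is symmetric under `1 ↔ 3`,
so `3v₃² = 1` likewise forces `κ₁ = κ₂`.
-/

theorem eq_of_three_mul_eq_one {p q r k₁ k₂ k₃ : ℝ} (hq : 0 ≤ q)
    (h0 : p - q + r = 1) (h1 : k₁ * p - k₂ * q + k₃ * r = 0) (h3 : k₁ + k₂ + k₃ = 0)
    (hp : 3 * p = 1) : k₂ = k₃ := by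
  have hpq : p + q ≠ 0 := by linarith
  have key : (p + q) * (k₃ - k₂) = 0 := by
    linear_combination h1 - p * h3 - k₃ * h0 + k₃ * hp
  linarith [(mul_eq_zero.mp key).resolve_left hpq]

theorem mul_eq_div_mul_sq {v : ℝ} (hv : v ≠ 0) (V : ℝ) : v * V = V / v * v ^ 2 := by
  field_simp

theorem stmt_7_general (v₁ v₂ v₃ V₁ V₂ V₃ : ℝ)
    (hv₁ : 0 < v₁) (hv₂ : 0 < v₂) (hv₃ : 0 < v₃)
    (h0 : v₁ ^ 2 - v₂ ^ 2 + v₃ ^ 2 = 1)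
    (h1 : v₁ * V₁ - v₂ * V₂ + v₃ * V₃ = 0)
    (h3 : V₁ / v₁ + V₂ / v₂ + V₃ / v₃ = 0)
    (hd12 : V₁ / v₁ ≠ V₂ / v₂)
    (hd23 : V₂ / v₂ ≠ V₃ / v₃) :
    3 * v₁ ^ 2 ≠ 1 ∧ 3 * v₃ ^ 2 ≠ 1 := by
  rw [mul_eq_div_mul_sq hv₁.ne', mul_eq_div_mul_sq hv₂.ne', mul_eq_div_mul_sq hv₃.ne'] at h1
  constructor
  · exact fun h ↦ hd23 (eq_of_three_mul_eq_one (sq_nonneg v₂) h0 h1 h3 h)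
  · exact fun h ↦ hd12 (eq_of_three_mul_eq_one (k₁ := V₃ / v₃) (k₃ := V₁ / v₁) (r := v₁ ^ 2)
      (sq_nonneg v₂) (by linarith) (by linarith) (by linarith) h).symm

/-- under the system (⋆) with c − c̃ > 0, vᵢ > 0, and pairwise
distinct principal curvatures Vᵢ/vᵢ, one has 3v₁² ≠ 1 and 3v₃² ≠ 1. -/
theorem stmt_7 (v₁ v₂ v₃ V₁ V₂ V₃ c ct : ℝ)
    (hv₁ : 0 < v₁) (hv₂ : 0 < v₂) (hv₃ : 0 < v₃) (hc : 0 < c - ct)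
    (h0 : v₁ ^ 2 - v₂ ^ 2 + v₃ ^ 2 = 1)
    (h1 : v₁ * V₁ - v₂ * V₂ + v₃ * V₃ = 0)
    (h2 : V₁ ^ 2 - V₂ ^ 2 + V₃ ^ 2 = c - ct)
    (h3 : V₁ / v₁ + V₂ / v₂ + V₃ / v₃ = 0)
    (hd12 : V₁ / v₁ ≠ V₂ / v₂) (hd13 : V₁ / v₁ ≠ V₃ / v₃)
    (hd23 : V₂ / v₂ ≠ V₃ / v₃) :
    3 * v₁ ^ 2 ≠ 1 ∧ 3 * v₃ ^ 2 ≠ 1 :=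
  stmt_7_general v₁ v₂ v₃ V₁ V₂ V₃ hv₁ hv₂ hv₃ h0 h1 h3 hd12 hd23
end

section
/- Let v₁, v₂, v₃ be positive real numbers, V₁, V₂, V₃ real numbers and c, c̃ real constants with c ≠ c̃, satisfying the system (⋆). If v₁ = v₂, then v₃ = 1, c > c̃, V₃² = (c − c̃)/2, V₁ = −((1 + v₁²)/(2v₁)) V₃ and V₂ = ((1 − v₁²)/(2v₁)) V₃. -/
/-!
Setting `v₁ = v₂` in the first equation leaves `v₃² = 1`, so `v₃ = 1`. The second and fourth
equations then give the difference and the sum of `V₁, V₂`: `V₁ - V₂ = -V₃ / v₁` and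
`V₁ + V₂ = -v₁ V₃`. Solving yields the formulas for `V₁, V₂`, and multiplying gives
`V₁² - V₂² = V₃²`, so the third equation reads `c - c̃ = 2 V₃²`, which is positive as `c ≠ c̃`.
-/

section
variable {K : Type*} [Field K] {v a b w : K}

theorem sub_eq_of_mul_sub_add_eq_zero (hv : v ≠ 0) (hdiff : v * (a - b) + w = 0) :
    a - b = -w / v := by
  field_simp
  linear_combination hdiff

theorem add_eq_of_add_div_add_eq_zero (hv : v ≠ 0) (hsum : (a + b) / v + w = 0) :
    a + b = -(v * w) := by
  field_simp at hsum
  linear_combination hsum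

theorem sq_sub_sq_eq_of_mul_sub_add_eq_zero (hv : v ≠ 0) (hdiff : v * (a - b) + w = 0)
    (hsum : (a + b) / v + w = 0) : a ^ 2 - b ^ 2 = w ^ 2 := by
  calc a ^ 2 - b ^ 2 = (a + b) * (a - b) := by ring
    _ = w ^ 2 := by
      rw [add_eq_of_add_div_add_eq_zero hv hsum, sub_eq_of_mul_sub_add_eq_zero hv hdiff]
      field_simp

theorem eq_mul_of_mul_sub_add_eq_zero [NeZero (2 : K)] (hv : v ≠ 0)
    (hdiff : v * (a - b) + w = 0) (hsum : (a + b) / v + w = 0) :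
    a = -((1 + v ^ 2) / (2 * v)) * w ∧ b = ((1 - v ^ 2) / (2 * v)) * w := by
  have hadd := add_eq_of_add_div_add_eq_zero hv hsum
  constructor <;> field_simp
  · linear_combination hdiff + v * hadd
  · linear_combination v * hadd - hdiff

end

theorem stmt_8_general (v₁ v₂ v₃ V₁ V₂ V₃ c ct : ℝ)
    (hv₁ : 0 < v₁) (hv₃ : 0 < v₃) (hc : c ≠ ct)
    (h0 : v₁ ^ 2 - v₂ ^ 2 + v₃ ^ 2 = 1)
    (h1 : v₁ * V₁ - v₂ * V₂ + v₃ * V₃ = 0)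
    (h2 : V₁ ^ 2 - V₂ ^ 2 + V₃ ^ 2 = c - ct)
    (h3 : V₁ / v₁ + V₂ / v₂ + V₃ / v₃ = 0)
    (h12 : v₁ = v₂) :
    v₃ = 1 ∧ c > ct ∧ V₃ ^ 2 = (c - ct) / 2 ∧
      V₁ = -((1 + v₁ ^ 2) / (2 * v₁)) * V₃ ∧
      V₂ = ((1 - v₁ ^ 2) / (2 * v₁)) * V₃ := by
  subst v₂
  obtain rfl : v₃ = 1 := (pow_eq_one_iff_of_nonneg hv₃.le two_ne_zero).1 (by linear_combination h0)
  have hdiff : v₁ * (V₁ - V₂) + V₃ = 0 := by linear_combination h1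
  have hsum : (V₁ + V₂) / v₁ + V₃ = 0 := by linear_combination h3
  have hcct : c - ct = 2 * V₃ ^ 2 := by
    linear_combination -h2 + sq_sub_sq_eq_of_mul_sub_add_eq_zero hv₁.ne' hdiff hsum
  have hpos : 0 < c - ct := lt_of_le_of_ne (by rw [hcct]; positivity) (sub_ne_zero.2 hc).symm
  exact ⟨rfl, by linarith, by linarith, eq_mul_of_mul_sub_add_eq_zero hv₁.ne' hdiff hsum⟩

/-- under the system (⋆) with c ≠ c̃ and vᵢ > 0, if v₁ = v₂ then
v₃ = 1, c > c̃, V₃² = (c − c̃)/2, V₁ = −((1 + v₁²)/(2v₁)) V₃ and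
V₂ = ((1 − v₁²)/(2v₁)) V₃. -/
theorem stmt_8 (v₁ v₂ v₃ V₁ V₂ V₃ c ct : ℝ)
    (hv₁ : 0 < v₁) (hv₂ : 0 < v₂) (hv₃ : 0 < v₃) (hc : c ≠ ct)
    (h0 : v₁ ^ 2 - v₂ ^ 2 + v₃ ^ 2 = 1)
    (h1 : v₁ * V₁ - v₂ * V₂ + v₃ * V₃ = 0)
    (h2 : V₁ ^ 2 - V₂ ^ 2 + V₃ ^ 2 = c - ct)
    (h3 : V₁ / v₁ + V₂ / v₂ + V₃ / v₃ = 0)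
    (h12 : v₁ = v₂) :
    v₃ = 1 ∧ c > ct ∧ V₃ ^ 2 = (c - ct) / 2 ∧
      V₁ = -((1 + v₁ ^ 2) / (2 * v₁)) * V₃ ∧
      V₂ = ((1 - v₁ ^ 2) / (2 * v₁)) * V₃ :=
  stmt_8_general v₁ v₂ v₃ V₁ V₂ V₃ c ct hv₁ hv₃ hc h0 h1 h2 h3 h12
end

section
/- Let U ⊆ ℝ³ be open and let v₁,v₂,v₃,V₁,V₂,V₃ : U → ℝ and h_{ij} : U → ℝ (1 ≤ i ≠ j ≤ 3) be differentiable functions such that at every point of U: vᵢ ≠ 0 for i = 1,2,3, V₁ ≠ 0, the equations v₁² − v₂² + v₃² = 1, v₁V₁ − v₂V₂ + v₃V₃ = 0, V₁/v₁ + V₂/v₂ + V₃/v₃ = 0 hold, and the PDEs hold: ∂vᵢ/∂uⱼ = h_{ji}vⱼ and ∂Vᵢ/∂uⱼ = h_{ji}Vⱼ for i ≠ j, and δᵢ ∂vᵢ/∂uᵢ + δⱼ h_{ij}vⱼ + δₖ h_{ik}vₖ = 0 and δᵢ ∂Vᵢ/∂uᵢ + δⱼ h_{ij}Vⱼ + δₖ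 h_{ik}Vₖ = 0 for pairwise distinct i,j,k. Then at every point of U and for all pairwise distinct i,j,k ∈ {1,2,3}: vⱼ φⱼ h_{ik} = vₖ φₖ h_{ij}. -/
/-- φᵢ = (δᵢ − vᵢ²)(δᵢ − 3vᵢ²). -/
noncomputable def phi (i : Fin 3) (t : ℝ) : ℝ :=
  (delta i - t ^ 2) * (delta i - 3 * t ^ 2)

private lemma stmt9_alg0 (w0 w1 w2 W0 W1 W2 a b : ℝ)
    (h0 : w0 ≠ 0) (h1 : w1 ≠ 0) (h2 : w2 ≠ 0) (hW : W0 ≠ 0)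
    (hE1 : w0^2 - w1^2 + w2^2 = 1)
    (hE2 : w0*W0 - w1*W1 + w2*W2 = 0)
    (hE3 : W0*w1*w2 + W1*w0*w2 + W2*w0*w1 = 0)
    (hD : (a*W1 - b*W2)*w1*w2 + W0*(a*w0)*w2 + W0*w1*(b*w0)
        + (a*W0)*w0*w2 + W1*(a*w1 - b*w2)*w2 + W1*w0*(b*w0)
        + (b*W0)*w0*w1 + W2*(a*w1 - b*w2)*w1 + W2*w0*(a*w0) = 0) :
    w1 * ((1 + w1^2) * (1 + 3*w1^2)) * b = w2 * ((1 - w2^2) * (1 - 3*w2^2)) * a := by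
  have hu : w0*w1*w2*W0 ≠ 0 :=
    mul_ne_zero (mul_ne_zero (mul_ne_zero h0 h1) h2) hW
  refine mul_left_cancel₀ hu ?_
  linear_combination (w0^2*w1*w2^3 + w0^2*w1^3*w2) * hD
    + (w0^2*w1^2*w2^3*b + w0^2*w1^3*w2^2*a - w0^4*w1*w2^2*a + w0^4*w1^2*w2*b) * hE2
    + (w0*w1*w2^4*b - 2*w0*w1^2*w2^3*a + 2*w0*w1^3*w2^2*b - w0*w1^4*w2*a
        - w0^3*w1*w2^2*b - w0^3*w1^2*w2*a) * hE3
    + (w0*w1*w2^2*W0*a - 3*w0*w1*w2^4*W0*a - w0*w1^2*w2*W0*b - w0*w1^2*w2^3*W0*b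
        - w0*w1^3*w2^2*W0*a - 3*w0*w1^4*w2*W0*b + w0^3*w1*w2^2*W0*a
        - w0^3*w1^2*w2*W0*b) * hE1

private lemma stmt9_alg1 (w0 w1 w2 W0 W1 W2 a b : ℝ)
    (h0 : w0 ≠ 0) (h1 : w1 ≠ 0) (h2 : w2 ≠ 0) (hW : W0 ≠ 0)
    (hE1 : w0^2 - w1^2 + w2^2 = 1)
    (hE2 : w0*W0 - w1*W1 + w2*W2 = 0)
    (hE3 : W0*w1*w2 + W1*w0*w2 + W2*w0*w1 = 0)
    (hD : (a*W1)*w1*w2 + W0*(a*w0 + b*w2)*w2 + W0*w1*(b*w1)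
        + (a*W0 + b*W2)*w0*w2 + W1*(a*w1)*w2 + W1*w0*(b*w1)
        + (b*W1)*w0*w1 + W2*(a*w1)*w1 + W2*w0*(a*w0 + b*w2) = 0) :
    w0 * ((1 - w0^2) * (1 - 3*w0^2)) * b = w2 * ((1 - w2^2) * (1 - 3*w2^2)) * a := by
  have hu : w0*w1*w2*W0 ≠ 0 :=
    mul_ne_zero (mul_ne_zero (mul_ne_zero h0 h1) h2) hW
  refine mul_left_cancel₀ hu ?_
  linear_combination (w0^2*w1*w2^3 + w0^2*w1^3*w2) * hD
    + (w0^2*w1^3*w2^2*a - 2*w0^3*w1*w2^3*b + 2*w0^3*w1^3*w2*b - w0^4*w1*w2^2*a) * hE2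
    + (-2*w0*w1^2*w2^3*a - w0*w1^4*w2*a - 4*w0^2*w1^2*w2^2*b - w0^3*w1^2*w2*a) * hE3
    + (w0*w1*w2^2*W0*a - 3*w0*w1*w2^4*W0*a - w0*w1^3*w2^2*W0*a - w0^2*w1*w2*W0*b
        - w0^2*w1*w2^3*W0*b + w0^2*w1^3*w2*W0*b + w0^3*w1*w2^2*W0*a
        + 3*w0^4*w1*w2*W0*b) * hE1

private lemma stmt9_alg2 (w0 w1 w2 W0 W1 W2 a b : ℝ)
    (h0 : w0 ≠ 0) (h1 : w1 ≠ 0) (h2 : w2 ≠ 0) (hW : W0 ≠ 0)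
    (hE1 : w0^2 - w1^2 + w2^2 = 1)
    (hE2 : w0*W0 - w1*W1 + w2*W2 = 0)
    (hE3 : W0*w1*w2 + W1*w0*w2 + W2*w0*w1 = 0)
    (hD : (a*W2)*w1*w2 + W0*(b*w2)*w2 + W0*w1*(-(a*w0) + b*w1)
        + (b*W2)*w0*w2 + W1*(a*w2)*w2 + W1*w0*(-(a*w0) + b*w1)
        + (-(a*W0) + b*W1)*w0*w1 + W2*(a*w2)*w1 + W2*w0*(b*w2) = 0) :
    w0 * ((1 - w0^2) * (1 - 3*w0^2)) * b = w1 * ((1 + w1^2) * (1 + 3*w1^2)) * a := by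
  have hu : w0*w1*w2*W0 ≠ 0 :=
    mul_ne_zero (mul_ne_zero (mul_ne_zero h0 h1) h2) hW
  refine mul_left_cancel₀ hu ?_
  linear_combination (w0^2*w1*w2^3 + w0^2*w1^3*w2) * hD
    + (-w0^2*w1^2*w2^3*a - 2*w0^3*w1*w2^3*b + 2*w0^3*w1^3*w2*b - w0^4*w1^2*w2*a) * hE2
    + (-w0*w1*w2^4*a - 2*w0*w1^3*w2^2*a - 4*w0^2*w1^2*w2^2*b + w0^3*w1*w2^2*a) * hE3
    + (w0*w1^2*w2*W0*a + w0*w1^2*w2^3*W0*a + 3*w0*w1^4*w2*W0*a - w0^2*w1*w2*W0*b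
        - w0^2*w1*w2^3*W0*b + w0^2*w1^3*w2*W0*b + w0^3*w1^2*w2*W0*a
        + 3*w0^4*w1*w2*W0*b) * hE1

/-- under the stated differential system on an open U ⊆ ℝ³, at
every point of U and for all pairwise distinct i,j,k:
vⱼ φⱼ h_{ik} = vₖ φₖ h_{ij}. -/
theorem stmt_9 (U : Set (Fin 3 → ℝ)) (hU : IsOpen U)
    (v V : Fin 3 → (Fin 3 → ℝ) → ℝ)
    (h : Fin 3 → Fin 3 → (Fin 3 → ℝ) → ℝ)
    (hdv : ∀ i, DifferentiableOn ℝ (v i) U)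
    (hdV : ∀ i, DifferentiableOn ℝ (V i) U)
    (hdh : ∀ i j, i ≠ j → DifferentiableOn ℝ (h i j) U)
    (hyp : ∀ x ∈ U,
      (∀ i, v i x ≠ 0) ∧
      V 0 x ≠ 0 ∧
      (v 0 x) ^ 2 - (v 1 x) ^ 2 + (v 2 x) ^ 2 = 1 ∧
      v 0 x * V 0 x - v 1 x * V 1 x + v 2 x * V 2 x = 0 ∧
      V 0 x / v 0 x + V 1 x / v 1 x + V 2 x / v 2 x = 0 ∧
      (∀ i j, i ≠ j →
        fderiv ℝ (v i) x (Pi.single j 1) = h j i x * v j x) ∧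
      (∀ i j, i ≠ j →
        fderiv ℝ (V i) x (Pi.single j 1) = h j i x * V j x) ∧
      (∀ i j k, i ≠ j → j ≠ k → i ≠ k →
        delta i * fderiv ℝ (v i) x (Pi.single i 1)
          + delta j * (h i j x * v j x) + delta k * (h i k x * v k x) = 0) ∧
      (∀ i j k, i ≠ j → j ≠ k → i ≠ k →
        delta i * fderiv ℝ (V i) x (Pi.single i 1)
          + delta j * (h i j x * V j x) + delta k * (h i k x * V k x) = 0)) :
    ∀ x ∈ U, ∀ i j k : Fin 3, i ≠ j → j ≠ k → i ≠ k →
      v j x * phi j (v j x) * h i k x = v k x * phi k (v k x) * h i j x := by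
  intro x hx i j k hij hjk hik
  obtain ⟨hv, hV0, hE1, hE2, hE3, hPv, hPV, hδv, hδV⟩ := hyp x hx
  have hmem : U ∈ nhds x := hU.mem_nhds hx
  have hva : ∀ m : Fin 3, HasFDerivAt (v m) (fderiv ℝ (v m) x) x := fun m =>
    ((hdv m).differentiableAt hmem).hasFDerivAt
  have hVa : ∀ m : Fin 3, HasFDerivAt (V m) (fderiv ℝ (V m) x) x := fun m =>
    ((hdV m).differentiableAt hmem).hasFDerivAt
  have HF := ((((hVa 0).mul (hva 1)).mul (hva 2)).add
      ((((hVa 1).mul (hva 0)).mul (hva 2)).add (((hVa 2).mul (hva 0)).mul (hva 1))))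
  have hzero : (fun y => V 0 y * v 1 y * v 2 y + (V 1 y * v 0 y * v 2 y
      + V 2 y * v 0 y * v 1 y)) =ᶠ[nhds x] (fun _ => (0:ℝ)) := by
    filter_upwards [hmem] with y hy
    obtain ⟨hvy, -, -, -, he3, -⟩ := hyp y hy
    have h0 := hvy 0
    have h1 := hvy 1
    have h2 := hvy 2
    field_simp at he3
    linear_combination he3
  have hLzero := (HF.congr_of_eventuallyEq hzero.symm).unique (hasFDerivAt_const 0 x)
  have hkey := congrArg (fun (L : (Fin 3 → ℝ) →L[ℝ] ℝ) => L (Pi.single i 1)) hLzero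
  simp only [ContinuousLinearMap.add_apply, ContinuousLinearMap.coe_smul',
    Pi.smul_apply, ContinuousLinearMap.smul_apply, smul_eq_mul,
    ContinuousLinearMap.zero_apply, Pi.mul_apply] at hkey
  have hE3' : V 0 x * v 1 x * v 2 x + V 1 x * v 0 x * v 2 x + V 2 x * v 0 x * v 1 x = 0 := by
    have h0 := hv 0
    have h1 := hv 1
    have h2 := hv 2
    field_simp at hE3
    linear_combination hE3
  fin_cases i <;> fin_cases j <;> fin_cases k
  any_goals exact absurd rfl hij
  any_goals exact absurd rfl hjk
  any_goals exact absurd rfl hik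
  · simp only [Fin.isValue, Fin.zero_eta, Fin.mk_one, Fin.reduceFinMk] at hkey ⊢
    rw [hPv 1 0 (by decide), hPV 1 0 (by decide), hPv 2 0 (by decide), hPV 2 0 (by decide)] at hkey
    have hDv : fderiv ℝ (v 0) x (Pi.single 0 1) = h 0 1 x * v 1 x - h 0 2 x * v 2 x := by
      have hd := hδv 0 1 2 (by decide) (by decide) (by decide)
      simp only [delta, Matrix.cons_val_zero, Matrix.cons_val_one, Matrix.head_cons,
         Matrix.cons_val_two, Matrix.tail_cons] at hd
      linarith
    have hDV : fderiv ℝ (V 0) x (Pi.single 0 1) = h 0 1 x * V 1 x - h 0 2 x * V 2 x := by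
      have hd := hδV 0 1 2 (by decide) (by decide) (by decide)
      simp only [delta, Matrix.cons_val_zero, Matrix.cons_val_one, Matrix.head_cons,
         Matrix.cons_val_two, Matrix.tail_cons] at hd
      linarith
    rw [hDv, hDV] at hkey
    have halg := stmt9_alg0 (v 0 x) (v 1 x) (v 2 x) (V 0 x) (V 1 x) (V 2 x)
      (h 0 1 x) (h 0 2 x) (hv 0) (hv 1) (hv 2) hV0 hE1 hE2 hE3' (by linear_combination hkey)
    simp only [phi, delta, Matrix.cons_val_zero, Matrix.cons_val_one, Matrix.head_cons,
      Matrix.cons_val_two, Matrix.tail_cons]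
    linear_combination halg
  · simp only [Fin.isValue, Fin.zero_eta, Fin.mk_one, Fin.reduceFinMk] at hkey ⊢
    rw [hPv 1 0 (by decide), hPV 1 0 (by decide), hPv 2 0 (by decide), hPV 2 0 (by decide)] at hkey
    have hDv : fderiv ℝ (v 0) x (Pi.single 0 1) = h 0 1 x * v 1 x - h 0 2 x * v 2 x := by
      have hd := hδv 0 1 2 (by decide) (by decide) (by decide)
      simp only [delta, Matrix.cons_val_zero, Matrix.cons_val_one, Matrix.head_cons,
         Matrix.cons_val_two, Matrix.tail_cons] at hd
      linarith
    have hDV : fderiv ℝ (V 0) x (Pi.single 0 1) = h 0 1 x * V 1 x - h 0 2 x * V 2 x := by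
      have hd := hδV 0 1 2 (by decide) (by decide) (by decide)
      simp only [delta, Matrix.cons_val_zero, Matrix.cons_val_one, Matrix.head_cons,
         Matrix.cons_val_two, Matrix.tail_cons] at hd
      linarith
    rw [hDv, hDV] at hkey
    have halg := stmt9_alg0 (v 0 x) (v 1 x) (v 2 x) (V 0 x) (V 1 x) (V 2 x)
      (h 0 1 x) (h 0 2 x) (hv 0) (hv 1) (hv 2) hV0 hE1 hE2 hE3' (by linear_combination hkey)
    simp only [phi, delta, Matrix.cons_val_zero, Matrix.cons_val_one, Matrix.head_cons,
      Matrix.cons_val_two, Matrix.tail_cons]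
    linear_combination -halg
  · simp only [Fin.isValue, Fin.zero_eta, Fin.mk_one, Fin.reduceFinMk] at hkey ⊢
    rw [hPv 0 1 (by decide), hPV 0 1 (by decide), hPv 2 1 (by decide), hPV 2 1 (by decide)] at hkey
    have hDv : fderiv ℝ (v 1) x (Pi.single 1 1) = h 1 0 x * v 0 x + h 1 2 x * v 2 x := by
      have hd := hδv 1 0 2 (by decide) (by decide) (by decide)
      simp only [delta, Matrix.cons_val_zero, Matrix.cons_val_one, Matrix.head_cons,
         Matrix.cons_val_two, Matrix.tail_cons] at hd
      linarith
    have hDV : fderiv ℝ (V 1) x (Pi.single 1 1) = h 1 0 x * V 0 x + h 1 2 x * V 2 x := by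
      have hd := hδV 1 0 2 (by decide) (by decide) (by decide)
      simp only [delta, Matrix.cons_val_zero, Matrix.cons_val_one, Matrix.head_cons,
         Matrix.cons_val_two, Matrix.tail_cons] at hd
      linarith
    rw [hDv, hDV] at hkey
    have halg := stmt9_alg1 (v 0 x) (v 1 x) (v 2 x) (V 0 x) (V 1 x) (V 2 x)
      (h 1 0 x) (h 1 2 x) (hv 0) (hv 1) (hv 2) hV0 hE1 hE2 hE3' (by linear_combination hkey)
    simp only [phi, delta, Matrix.cons_val_zero, Matrix.cons_val_one, Matrix.head_cons,
      Matrix.cons_val_two, Matrix.tail_cons]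
    linear_combination halg
  · simp only [Fin.isValue, Fin.zero_eta, Fin.mk_one, Fin.reduceFinMk] at hkey ⊢
    rw [hPv 0 1 (by decide), hPV 0 1 (by decide), hPv 2 1 (by decide), hPV 2 1 (by decide)] at hkey
    have hDv : fderiv ℝ (v 1) x (Pi.single 1 1) = h 1 0 x * v 0 x + h 1 2 x * v 2 x := by
      have hd := hδv 1 0 2 (by decide) (by decide) (by decide)
      simp only [delta, Matrix.cons_val_zero, Matrix.cons_val_one, Matrix.head_cons,
         Matrix.cons_val_two, Matrix.tail_cons] at hd
      linarith
    have hDV : fderiv ℝ (V 1) x (Pi.single 1 1) = h 1 0 x * V 0 x + h 1 2 x * V 2 x := by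
      have hd := hδV 1 0 2 (by decide) (by decide) (by decide)
      simp only [delta, Matrix.cons_val_zero, Matrix.cons_val_one, Matrix.head_cons,
         Matrix.cons_val_two, Matrix.tail_cons] at hd
      linarith
    rw [hDv, hDV] at hkey
    have halg := stmt9_alg1 (v 0 x) (v 1 x) (v 2 x) (V 0 x) (V 1 x) (V 2 x)
      (h 1 0 x) (h 1 2 x) (hv 0) (hv 1) (hv 2) hV0 hE1 hE2 hE3' (by linear_combination hkey)
    simp only [phi, delta, Matrix.cons_val_zero, Matrix.cons_val_one, Matrix.head_cons,
      Matrix.cons_val_two, Matrix.tail_cons]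
    linear_combination -halg
  · simp only [Fin.isValue, Fin.zero_eta, Fin.mk_one, Fin.reduceFinMk] at hkey ⊢
    rw [hPv 0 2 (by decide), hPV 0 2 (by decide), hPv 1 2 (by decide), hPV 1 2 (by decide)] at hkey
    have hDv : fderiv ℝ (v 2) x (Pi.single 2 1) = -(h 2 0 x * v 0 x) + h 2 1 x * v 1 x := by
      have hd := hδv 2 0 1 (by decide) (by decide) (by decide)
      simp only [delta, Matrix.cons_val_zero, Matrix.cons_val_one, Matrix.head_cons,
         Matrix.cons_val_two, Matrix.tail_cons] at hd
      linarith
    have hDV : fderiv ℝ (V 2) x (Pi.single 2 1) = -(h 2 0 x * V 0 x) + h 2 1 x * V 1 x := by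
      have hd := hδV 2 0 1 (by decide) (by decide) (by decide)
      simp only [delta, Matrix.cons_val_zero, Matrix.cons_val_one, Matrix.head_cons,
         Matrix.cons_val_two, Matrix.tail_cons] at hd
      linarith
    rw [hDv, hDV] at hkey
    have halg := stmt9_alg2 (v 0 x) (v 1 x) (v 2 x) (V 0 x) (V 1 x) (V 2 x)
      (h 2 0 x) (h 2 1 x) (hv 0) (hv 1) (hv 2) hV0 hE1 hE2 hE3' (by linear_combination hkey)
    simp only [phi, delta, Matrix.cons_val_zero, Matrix.cons_val_one, Matrix.head_cons,
      Matrix.cons_val_two, Matrix.tail_cons]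
    linear_combination halg
  · simp only [Fin.isValue, Fin.zero_eta, Fin.mk_one, Fin.reduceFinMk] at hkey ⊢
    rw [hPv 0 2 (by decide), hPV 0 2 (by decide), hPv 1 2 (by decide), hPV 1 2 (by decide)] at hkey
    have hDv : fderiv ℝ (v 2) x (Pi.single 2 1) = -(h 2 0 x * v 0 x) + h 2 1 x * v 1 x := by
      have hd := hδv 2 0 1 (by decide) (by decide) (by decide)
      simp only [delta, Matrix.cons_val_zero, Matrix.cons_val_one, Matrix.head_cons,
         Matrix.cons_val_two, Matrix.tail_cons] at hd
      linarith
    have hDV : fderiv ℝ (V 2) x (Pi.single 2 1) = -(h 2 0 x * V 0 x) + h 2 1 x * V 1 x := by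
      have hd := hδV 2 0 1 (by decide) (by decide) (by decide)
      simp only [delta, Matrix.cons_val_zero, Matrix.cons_val_one, Matrix.head_cons,
         Matrix.cons_val_two, Matrix.tail_cons] at hd
      linarith
    rw [hDv, hDV] at hkey
    have halg := stmt9_alg2 (v 0 x) (v 1 x) (v 2 x) (V 0 x) (V 1 x) (V 2 x)
      (h 2 0 x) (h 2 1 x) (hv 0) (hv 1) (hv 2) hV0 hE1 hE2 hE3' (by linear_combination hkey)
    simp only [phi, delta, Matrix.cons_val_zero, Matrix.cons_val_one, Matrix.head_cons,
      Matrix.cons_val_two, Matrix.tail_cons]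
    linear_combination -halg
end

section
/- Let v₁, v₂, v₃ be nonzero real numbers and V₁, V₂, V₃ real numbers satisfying v₁² − v₂² + v₃² = 1, v₁V₁ − v₂V₂ + v₃V₃ = 0 and V₁/v₁ + V₂/v₂ + V₃/v₃ = 0. Then v₂ φ₂ V₂ − v₃ φ₃ V₃ = −(V₁/v₁)(2v₁⁴ − 3v₁⁶ − v₃² + v₁²v₃² + v₃⁴), where φ₂ = (−1 − v₂²)(−1 − 3v₂²) and φ₃ = (1 − v₃²)(1 − 3v₃²). (This is the algebraic identity underlying the formula for ∂V₁/∂u₁ in the reduced PDE system of the paper.) -/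
/-- v₂φ₂V₂ − v₃φ₃V₃ = −(V₁/v₁)(2v₁⁴ − 3v₁⁶ − v₃² + v₁²v₃² + v₃⁴),
where φ₂ = (−1 − v₂²)(−1 − 3v₂²) and φ₃ = (1 − v₃²)(1 − 3v₃²). -/
theorem stmt_10 (v₁ v₂ v₃ V₁ V₂ V₃ : ℝ)
    (hv₁ : v₁ ≠ 0) (hv₂ : v₂ ≠ 0) (hv₃ : v₃ ≠ 0)
    (h0 : v₁ ^ 2 - v₂ ^ 2 + v₃ ^ 2 = 1)
    (h1 : v₁ * V₁ - v₂ * V₂ + v₃ * V₃ = 0)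
    (h2 : V₁ / v₁ + V₂ / v₂ + V₃ / v₃ = 0) :
    v₂ * ((-1 - v₂ ^ 2) * (-1 - 3 * v₂ ^ 2)) * V₂
      - v₃ * ((1 - v₃ ^ 2) * (1 - 3 * v₃ ^ 2)) * V₃ =
    -(V₁ / v₁) * (2 * v₁ ^ 4 - 3 * v₁ ^ 6 - v₃ ^ 2 + v₁ ^ 2 * v₃ ^ 2 + v₃ ^ 4) := by
  have h2' : V₁ * v₂ * v₃ + V₂ * v₁ * v₃ + V₃ * v₁ * v₂ = 0 := by
    field_simp at h2; linarith
  have hden : v₂ ^ 2 + v₃ ^ 2 ≠ 0 := by positivity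
  have hV₂ : V₂ = V₁ * v₂ * (v₁ ^ 2 - v₃ ^ 2) / (v₁ * (v₂ ^ 2 + v₃ ^ 2)) := by
    field_simp
    linear_combination -(v₁ * v₂) * h1 + v₃ * h2'
  have hV₃ : V₃ = -(V₁ * v₃ * (v₁ ^ 2 + v₂ ^ 2)) / (v₁ * (v₂ ^ 2 + v₃ ^ 2)) := by
    field_simp
    linear_combination (v₁ * v₃) * h1 + v₂ * h2'
  rw [hV₂, hV₃]
  field_simp
  ring_nf
  linear_combination (v₁*v₃^4*V₁ + v₁*v₂^2*v₃^2*V₁ + 3*v₁*v₂^2*v₃^4*V₁ + 3*v₁*v₂^4*v₃^2*V₁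
    - v₁^3*v₃^2*V₁ + 3*v₁^3*v₃^4*V₁ - v₁^3*v₂^2*V₁ - 3*v₁^3*v₂^4*V₁
    - 3*v₁^5*v₃^2*V₁ - 3*v₁^5*v₂^2*V₁
    - v₁*v₃^4*V₁ - v₁^2*v₃^2*V₁ + v₁^3*v₃^2*V₁ + v₃^4*V₁ - 3*v₁^3*v₃^4*V₁ + 3*v₁^2*v₃^4*V₁
    - 3*v₁^4*v₃^2*V₁ + 3*v₁^5*v₃^2*V₁ - v₁*v₂^2*v₃^2*V₁ - v₁^2*v₂^2*V₁ + v₁^3*v₂^2*V₁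
    + v₂^2*v₃^2*V₁ - 3*v₁^4*v₂^2*V₁ + 3*v₁^5*v₂^2*V₁ - 3*v₁*v₂^2*v₃^4*V₁ + 3*v₂^2*v₃^4*V₁
    - 3*v₁*v₂^4*v₃^2*V₁ - 3*v₁^2*v₂^4*V₁ + 3*v₁^3*v₂^4*V₁ + 3*v₂^4*v₃^2*V₁) * h0
end

section
/- There do not exist real numbers v₁, v₂, v₃, V₁, V₂, V₃, c with vᵢ ≠ 0 and φᵢ ≠ 0 for i = 1,2,3 and with V₁/v₁, V₂/v₂, V₃/v₃ pairwise distinct, satisfying the three equations: c v₁v₂v₃(φ₁ − φ₂ − φ₃) = −v₁V₂V₃φ₁ + v₂V₁V₃φ₂ + v₃V₁V₂φ₃; c v₁v₂v₃(−φ₁ + φ₂ − φ₃) = v₁V₂V₃φ₁ − v₂V₁V₃φ₂ + v₃V₁V₂φ₃; c v₁v₂v₃(−φ₁ − φ₂ + φ₃) = v₁V₂V₃φ₁ + v₂V₁V₃φ₂ − v₃V₁V₂φ₃. -/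
/-!
Write `xᵢ = Vᵢ / vᵢ`. Adding two of the three equations cancels every term except the one
carrying the third `φₖ`, and dividing by `vₖ φₖ` leaves `xᵢ xⱼ = -c`. So the three pairwise
products of `x₁, x₂, x₃` coincide, which forces two of the `xᵢ` to be equal.
-/

theorem eq_or_eq_or_eq_of_mul_eq_of_mul_eq {M : Type*}
    [CommMonoidWithZero M] [IsCancelMulZero M] {a b c : M}
    (hab : a * b = a * c) (hbc : a * b = b * c) : a = b ∨ a = c ∨ b = c := by
  rcases eq_or_ne a 0 with rfl | ha
  · rcases mul_eq_zero.1 (hbc.symm.trans (zero_mul b)) with rfl | rfl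
    · exact Or.inl rfl
    · exact Or.inr (Or.inl rfl)
  · exact Or.inr (Or.inr (mul_left_cancel₀ ha hab))

theorem div_mul_div_eq_neg_of_mul_eq {K : Type*} [Field K] {v₁ v₂ v₃ V₁ V₂ c φ : K}
    (hv₁ : v₁ ≠ 0) (hv₂ : v₂ ≠ 0) (hv₃ : v₃ ≠ 0) (hφ : φ ≠ 0)
    (h : v₃ * V₁ * V₂ * φ = -(c * (v₁ * v₂ * v₃) * φ)) : V₁ / v₁ * (V₂ / v₂) = -c := by
  have hV : V₁ * V₂ = -(c * (v₁ * v₂)) :=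
    mul_right_cancel₀ (mul_ne_zero hv₃ hφ) (by linear_combination h)
  field_simp
  linear_combination hV

/-- there are no reals v₁,v₂,v₃,V₁,V₂,V₃,c with vᵢ ≠ 0, φᵢ ≠ 0,
V₁/v₁, V₂/v₂, V₃/v₃ pairwise distinct, satisfying the three diagonal equations.
Here φ₁ = (1 − v₁²)(1 − 3v₁²), φ₂ = (−1 − v₂²)(−1 − 3v₂²),
φ₃ = (1 − v₃²)(1 − 3v₃²). -/
theorem stmt_12 :
    ¬ ∃ v₁ v₂ v₃ V₁ V₂ V₃ c : ℝ,
      v₁ ≠ 0 ∧ v₂ ≠ 0 ∧ v₃ ≠ 0 ∧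
      (1 - v₁ ^ 2) * (1 - 3 * v₁ ^ 2) ≠ 0 ∧
      (-1 - v₂ ^ 2) * (-1 - 3 * v₂ ^ 2) ≠ 0 ∧
      (1 - v₃ ^ 2) * (1 - 3 * v₃ ^ 2) ≠ 0 ∧
      V₁ / v₁ ≠ V₂ / v₂ ∧ V₁ / v₁ ≠ V₃ / v₃ ∧ V₂ / v₂ ≠ V₃ / v₃ ∧
      (c * (v₁ * v₂ * v₃) *
          ((1 - v₁ ^ 2) * (1 - 3 * v₁ ^ 2) - (-1 - v₂ ^ 2) * (-1 - 3 * v₂ ^ 2)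
            - (1 - v₃ ^ 2) * (1 - 3 * v₃ ^ 2)) =
        -(v₁ * V₂ * V₃ * ((1 - v₁ ^ 2) * (1 - 3 * v₁ ^ 2)))
          + v₂ * V₁ * V₃ * ((-1 - v₂ ^ 2) * (-1 - 3 * v₂ ^ 2))
          + v₃ * V₁ * V₂ * ((1 - v₃ ^ 2) * (1 - 3 * v₃ ^ 2))) ∧
      (c * (v₁ * v₂ * v₃) *
          (-((1 - v₁ ^ 2) * (1 - 3 * v₁ ^ 2)) + (-1 - v₂ ^ 2) * (-1 - 3 * v₂ ^ 2)
            - (1 - v₃ ^ 2) * (1 - 3 * v₃ ^ 2)) =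
        v₁ * V₂ * V₃ * ((1 - v₁ ^ 2) * (1 - 3 * v₁ ^ 2))
          - v₂ * V₁ * V₃ * ((-1 - v₂ ^ 2) * (-1 - 3 * v₂ ^ 2))
          + v₃ * V₁ * V₂ * ((1 - v₃ ^ 2) * (1 - 3 * v₃ ^ 2))) ∧
      (c * (v₁ * v₂ * v₃) *
          (-((1 - v₁ ^ 2) * (1 - 3 * v₁ ^ 2)) - (-1 - v₂ ^ 2) * (-1 - 3 * v₂ ^ 2)
            + (1 - v₃ ^ 2) * (1 - 3 * v₃ ^ 2)) =
        v₁ * V₂ * V₃ * ((1 - v₁ ^ 2) * (1 - 3 * v₁ ^ 2))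
          + v₂ * V₁ * V₃ * ((-1 - v₂ ^ 2) * (-1 - 3 * v₂ ^ 2))
          - v₃ * V₁ * V₂ * ((1 - v₃ ^ 2) * (1 - 3 * v₃ ^ 2))) := by
  rintro ⟨v₁, v₂, v₃, V₁, V₂, V₃, c, hv₁, hv₂, hv₃, hφ₁, hφ₂, hφ₃, h12, h13, h23, e₁, e₂, e₃⟩
  have x12 : V₁ / v₁ * (V₂ / v₂) = -c :=
    div_mul_div_eq_neg_of_mul_eq hv₁ hv₂ hv₃ hφ₃ (by linear_combination -(e₁ + e₂) / 2)
  have x13 : V₁ / v₁ * (V₃ / v₃) = -c :=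
    div_mul_div_eq_neg_of_mul_eq hv₁ hv₃ hv₂ hφ₂ (by linear_combination -(e₁ + e₃) / 2)
  have x23 : V₂ / v₂ * (V₃ / v₃) = -c :=
    div_mul_div_eq_neg_of_mul_eq hv₂ hv₃ hv₁ hφ₁ (by linear_combination -(e₂ + e₃) / 2)
  rcases eq_or_eq_or_eq_of_mul_eq_of_mul_eq (x12.trans x13.symm) (x12.trans x23.symm)
    with h | h | h
  · exact h12 h
  · exact h13 h
  · exact h23 h
end

section
/- Let λ, λ₃, μ₁, μ₂, μ₃, c, c̃ be real numbers with c ≠ c̃ satisfying λ₃ = −2λ, c + λ² = c̃ + μ₁μ₂, c + λλ₃ = c̃ + μ₁μ₃ and c + λλ₃ = c̃ + μ₂μ₃. Then either (μ₁ = μ₂, μ₁ ≠ 0 and 2μ₁ + μ₃ = 3(c − c̃)/μ₁), or (μ₃ = 0, λ ≠ 0 and c − c̃ = 2λ²). -/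
/-!
Subtracting the last two Gauss equations gives `(μ₁ - μ₂) μ₃ = 0`. Minimality makes
`2λ² + λλ₃ = λ(2λ + λ₃)` vanish, so twice the first equation plus the second gives
`3(c - c̃) = 2μ₁μ₂ + μ₁μ₃`. If `μ₃ = 0`, the second equation reads `c - c̃ = -λλ₃ = 2λ²`;
otherwise `μ₁ = μ₂`, and the identity can be divided by `μ₁`, which is nonzero because `c ≠ c̃`.
-/

lemma three_mul_sub_eq_of_gauss {lam lam₃ mu₁ mu₂ mu₃ c ct : ℝ} (h0 : lam₃ = -2 * lam)
    (h1 : c + lam ^ 2 = ct + mu₁ * mu₂) (h2 : c + lam * lam₃ = ct + mu₁ * mu₃) :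
    3 * (c - ct) = 2 * (mu₁ * mu₂) + mu₁ * mu₃ := by
  linear_combination 2 * h1 + h2 - lam * h0

/-- Gauss equations, multiplicity-two case with c ≠ c̃. -/
theorem stmt_15 (lam lam₃ mu₁ mu₂ mu₃ c ct : ℝ) (hc : c ≠ ct)
    (h0 : lam₃ = -2 * lam)
    (h1 : c + lam ^ 2 = ct + mu₁ * mu₂)
    (h2 : c + lam * lam₃ = ct + mu₁ * mu₃)
    (h3 : c + lam * lam₃ = ct + mu₂ * mu₃) :
    (mu₁ = mu₂ ∧ mu₁ ≠ 0 ∧ 2 * mu₁ + mu₃ = 3 * (c - ct) / mu₁) ∨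
    (mu₃ = 0 ∧ lam ≠ 0 ∧ c - ct = 2 * lam ^ 2) := by
  have hsplit : (mu₁ - mu₂) * mu₃ = 0 := by linear_combination h3 - h2
  have htrace := three_mul_sub_eq_of_gauss h0 h1 h2
  by_cases hmu₃ : mu₃ = 0
  · subst hmu₃
    have hdiff : c - ct = 2 * lam ^ 2 := by linear_combination h2 - lam * h0
    refine Or.inr ⟨rfl, ?_, hdiff⟩
    rintro rfl
    exact hc (by linear_combination hdiff)
  · obtain rfl : mu₁ = mu₂ := sub_eq_zero.1 ((mul_eq_zero.1 hsplit).resolve_right hmu₃)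
    have hmu₁ : mu₁ ≠ 0 := by
      rintro rfl
      exact hc (by linear_combination htrace / 3)
    refine Or.inl ⟨rfl, hmu₁, ?_⟩
    rw [eq_div_iff hmu₁]
    linear_combination -htrace
end
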